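/- arXiv:2509.24349 — 2 statements merged into one kernel-verified Lean document; each statement's English description precedes it below -/
import Mathlib

section
/- Under the hypotheses of the previous setting (every vertex outside Hᵢ has exactly one neighbor in Hᵢ, for i = 1,2, with Δ = H₁ ∩ H₂), the relation (u₁,u₂) ↦ (u₁ adjacent to u₂) restricted to (H₁\Δ) × (H₂\Δ) defines a bijection between H₁ ⊖ Δ and H₂ ⊖ Δ, where Hᵢ ⊖ Δ = { u ∈ Hᵢ\Δ : u has no neighbor in Δ }. -/
/-!
Let `u₁ ∈ H₁ ⊖ Δ`. Since `u₁ ∉ H₂`, it has a unique neighbour `u₂ ∈ H₂`, and `u₂ ∉ Δ` because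
`u₁` has no neighbour in `Δ`; so `u₂ ∉ H₁` and `u₁` is the unique neighbour of `u₂` in `H₁`.
As `u₁ ∉ Δ`, this leaves `u₂` without neighbours in `Δ`, i.e. `u₂ ∈ H₂ ⊖ Δ`. The situation is
symmetric in `H₁` and `H₂`.
-/

namespace SimpleGraph

variable {V : Type*} {Γ : SimpleGraph V} [DecidableRel Γ.Adj]

lemma existsUnique_adj_of_card_filter_adj_eq_one {H : Finset V} {u : V}
    (h : (H.filter (fun v => Γ.Adj u v)).card = 1) : ∃! v, v ∈ H ∧ Γ.Adj u v := by
  simpa only [Finset.mem_filter] using Finset.card_eq_one_iff_existsUnique.mp h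

variable [DecidableEq V]

variable (Γ) in
def perfectComplement (H Δ : Finset V) : Finset V :=
  (H \ Δ).filter (fun u => ∀ v ∈ Δ, ¬ Γ.Adj u v)

lemma existsUnique_adj_mem_perfectComplement {H₁ H₂ : Finset V}
    (h₁ : ∀ u ∉ H₁, ∃! v, v ∈ H₁ ∧ Γ.Adj u v) (h₂ : ∀ u ∉ H₂, ∃! v, v ∈ H₂ ∧ Γ.Adj u v)
    {u₁ : V} (hu₁ : u₁ ∈ Γ.perfectComplement H₁ (H₁ ∩ H₂)) :
    ∃! u₂, u₂ ∈ Γ.perfectComplement H₂ (H₁ ∩ H₂) ∧ Γ.Adj u₁ u₂ := by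
  simp only [perfectComplement, Finset.mem_filter, Finset.mem_sdiff, Finset.mem_inter] at hu₁ ⊢
  obtain ⟨⟨hu₁H₁, hu₁Δ⟩, hu₁_isolated⟩ := hu₁
  have hu₁H₂ : u₁ ∉ H₂ := fun h => hu₁Δ ⟨hu₁H₁, h⟩
  obtain ⟨u₂, ⟨hu₂H₂, hadj⟩, hu₂_unique⟩ := h₂ u₁ hu₁H₂
  have hu₂H₁ : u₂ ∉ H₁ := fun h => hu₁_isolated u₂ ⟨h, hu₂H₂⟩ hadj
  have hu₁_unique : ∀ v, v ∈ H₁ ∧ Γ.Adj u₂ v → v = u₁ :=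
    fun v hv => (h₁ u₂ hu₂H₁).unique hv ⟨hu₁H₁, hadj.symm⟩
  have hu₂_isolated : ∀ v, v ∈ H₁ ∧ v ∈ H₂ → ¬ Γ.Adj u₂ v := by
    rintro v ⟨hvH₁, hvH₂⟩ hv
    obtain rfl := hu₁_unique v ⟨hvH₁, hv⟩
    exact hu₁H₂ hvH₂
  refine ⟨u₂, ⟨⟨⟨hu₂H₂, fun h => hu₂H₁ h.1⟩, hu₂_isolated⟩, hadj⟩, ?_⟩
  rintro w ⟨⟨⟨hwH₂, -⟩, -⟩, hw⟩
  exact hu₂_unique w ⟨hwH₂, hw⟩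

end SimpleGraph

theorem attachment_bijection
    {V : Type*} [Fintype V] [DecidableEq V]
    (Γ : SimpleGraph V) [DecidableRel Γ.Adj] (H1 H2 : Finset V)
    (h1 : ∀ u : V, u ∉ H1 → (H1.filter (fun v => Γ.Adj u v)).card = 1)
    (h2 : ∀ u : V, u ∉ H2 → (H2.filter (fun v => Γ.Adj u v)).card = 1) :
    -- Δ = H₁ ∩ H₂ and the perfect complements Hᵢ ⊖ Δ
    let Δ : Finset V := H1 ∩ H2
    let P1 : Finset V := (H1 \ Δ).filter (fun u => ∀ v ∈ Δ, ¬ Γ.Adj u v)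
    let P2 : Finset V := (H2 \ Δ).filter (fun u => ∀ v ∈ Δ, ¬ Γ.Adj u v)
    -- adjacency defines a bijection `H₁ ⊖ Δ ≃ H₂ ⊖ Δ`
    (∀ u1 ∈ P1, ∃! u2 : V, u2 ∈ P2 ∧ Γ.Adj u1 u2) ∧
    (∀ u2 ∈ P2, ∃! u1 : V, u1 ∈ P1 ∧ Γ.Adj u1 u2) := by
  intro Δ P1 P2
  have h1' u hu := SimpleGraph.existsUnique_adj_of_card_filter_adj_eq_one (h1 u hu)
  have h2' u hu := SimpleGraph.existsUnique_adj_of_card_filter_adj_eq_one (h2 u hu)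
  -- `P1`, `P2` decide `∀ v ∈ Δ` via `Fintype V`, so they equal `perfectComplement` only up to
  -- the `Decidable` instance; `ext` sidesteps this.
  have hP1 : P1 = Γ.perfectComplement H1 (H1 ∩ H2) := by
    ext; simp only [P1, Δ, SimpleGraph.perfectComplement, Finset.mem_filter]
  have hP2 : P2 = Γ.perfectComplement H2 (H2 ∩ H1) := by
    ext
    simp only [P2, Δ, SimpleGraph.perfectComplement, Finset.mem_filter, Finset.inter_comm H2 H1]
  rw [hP1, hP2]
  refine ⟨fun u1 hu1 => ?_, fun u2 hu2 => ?_⟩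
  · simpa only [Finset.inter_comm H2 H1] using
      SimpleGraph.existsUnique_adj_mem_perfectComplement h1' h2' hu1
  · simpa only [Finset.inter_comm H2 H1, Γ.adj_comm u2] using
      SimpleGraph.existsUnique_adj_mem_perfectComplement h2' h1' hu2
end

section
/- Let L be the lattice on generators v₀,…,v₇ (vertices of the Wagner graph C₈(1,4)) together with h and p, with h² = 8, vᵢ² = −2, vᵢ·h = 1, vᵢ·vⱼ given by adjacency in the Wagner graph, p² = 0, p·h = 3, and p·vᵢ = 1 for i ∈ {0,1,2} and p·vᵢ = 0 otherwise. Then the symmetric bilinear form on (Zv₀+⋯+Zv₇+Zh+Zp) has at least two positive eigenvalues (i.e., the form is not hyperbolic). -/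
/-- Gram matrix of the lattice generated by the vertices `v₀,…,v₇` of the
Wagner graph `C₈(1,4)` (indices `0..7`), `h` (index `8`), and a would-be
3-isotropic vector `p` (index `9`) with `p·vᵢ = 1` for `i ∈ {0,1,2}`. -/
def gramWagnerP : Matrix (Fin 10) (Fin 10) ℝ := fun i j =>
  if i.val < 8 then
    if j.val < 8 then
      if i = j then -2
      else if j.val = (i.val + 1) % 8 ∨ i.val = (j.val + 1) % 8 ∨
              j.val = (i.val + 4) % 8 ∨ i.val = (j.val + 4) % 8 then 1 else 0
    else if j.val = 8 then 1
    else if i.val = 0 ∨ i.val = 1 ∨ i.val = 2 then 1 else 0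
  else if i.val = 8 then
    if j.val < 8 then 1 else if j.val = 8 then 8 else 3
  else
    if j.val < 8 then (if j.val = 0 ∨ j.val = 1 ∨ j.val = 2 then 1 else 0)
    else if j.val = 8 then 3 else 0


/-!
The vector `h` has `h² = 8 > 0`, and
`z = 4v₀ + 8v₁ + 4v₂ - 4v₃ - 4v₄ - 2v₅ - 4v₆ - 4v₇ - 5h + 14p`
satisfies `z·h = 0` and `z² = 16`. Hence the form is positive definite on the plane spanned by
the orthogonal vectors `h` and `z`, so it has at least two positive eigenvalues.
-/

namespace Matrix

variable {n R : Type*} [Fintype n] [CommRing R]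

theorem IsSymm.dotProduct_mulVec_smul_add_smul {G : Matrix n n R} (hG : G.IsSymm)
    (x y : n → R) (a b : R) :
    (a • x + b • y) ⬝ᵥ G *ᵥ (a • x + b • y) =
      a ^ 2 * (x ⬝ᵥ G *ᵥ x) + 2 * a * b * (x ⬝ᵥ G *ᵥ y) + b ^ 2 * (y ⬝ᵥ G *ᵥ y) := by
  have hyx : y ⬝ᵥ G *ᵥ x = x ⬝ᵥ G *ᵥ y := by
    rw [← dotProduct_transpose_mulVec, hG.eq]
  simp only [mulVec_add, mulVec_smul, add_dotProduct, dotProduct_add, smul_dotProduct,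
    dotProduct_smul, smul_eq_mul, hyx]
  ring

theorem linearIndependent_pair_of_dotProduct_mulVec_pos [Preorder R] (G : Matrix n n R)
    {x y : n → R}
    (hpos : ∀ a b : R, ¬(a = 0 ∧ b = 0) → 0 < (a • x + b • y) ⬝ᵥ G *ᵥ (a • x + b • y)) :
    LinearIndependent R ![x, y] := by
  refine LinearIndependent.pair_iff.mpr fun s t hst => ?_
  by_contra hne
  simpa [hst] using hpos s t hne

variable [LinearOrder R] [IsStrictOrderedRing R]

theorem IsSymm.dotProduct_mulVec_smul_add_smul_pos {G : Matrix n n R} (hG : G.IsSymm)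
    {x y : n → R} (hx : 0 < x ⬝ᵥ G *ᵥ x) (hy : 0 < y ⬝ᵥ G *ᵥ y) (hxy : x ⬝ᵥ G *ᵥ y = 0)
    {a b : R} (hab : ¬(a = 0 ∧ b = 0)) :
    0 < (a • x + b • y) ⬝ᵥ G *ᵥ (a • x + b • y) := by
  rw [hG.dotProduct_mulVec_smul_add_smul, hxy, mul_zero, add_zero]
  rcases not_and_or.mp hab with ha | hb
  · exact add_pos_of_pos_of_nonneg (mul_pos (sq_pos_of_ne_zero ha) hx) (by positivity)
  · exact add_pos_of_nonneg_of_pos (by positivity) (mul_pos (sq_pos_of_ne_zero hb) hy)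

end Matrix

open Matrix

theorem gramWagnerP_isSymm : gramWagnerP.IsSymm :=
  IsSymm.ext fun i j => by fin_cases i <;> fin_cases j <;> simp [gramWagnerP]

def wagnerH : Fin 10 → ℝ := Pi.single 8 1

def wagnerZ : Fin 10 → ℝ := ![4, 8, 4, -4, -4, -2, -4, -4, -5, 14]

theorem wagnerH_dotProduct_mulVec_self : wagnerH ⬝ᵥ gramWagnerP *ᵥ wagnerH = 8 := by
  simp [wagnerH, gramWagnerP]

theorem wagnerZ_dotProduct_mulVec_self : wagnerZ ⬝ᵥ gramWagnerP *ᵥ wagnerZ = 16 := by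
  simp [wagnerZ, gramWagnerP, mulVec, dotProduct, Fin.sum_univ_succ]
  norm_num

theorem wagnerH_dotProduct_mulVec_wagnerZ : wagnerH ⬝ᵥ gramWagnerP *ᵥ wagnerZ = 0 := by
  simp [wagnerH, wagnerZ, gramWagnerP, mulVec, dotProduct, Fin.sum_univ_succ]
  norm_num

/-- The form has at least two positive eigenvalues: there is a 2-dimensional
subspace on which it is positive definite (so the lattice is not hyperbolic). -/
theorem wagner_with_isotropic_not_hyperbolic :
    ∃ x y : Fin 10 → ℝ, LinearIndependent ℝ ![x, y] ∧
      ∀ a b : ℝ, ¬ (a = 0 ∧ b = 0) →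
        0 < dotProduct (a • x + b • y) (gramWagnerP.mulVec (a • x + b • y)) := by
  have hpos : ∀ a b : ℝ, ¬(a = 0 ∧ b = 0) →
      0 < (a • wagnerH + b • wagnerZ) ⬝ᵥ gramWagnerP *ᵥ (a • wagnerH + b • wagnerZ) :=
    fun _ _ hab => gramWagnerP_isSymm.dotProduct_mulVec_smul_add_smul_pos
      (by rw [wagnerH_dotProduct_mulVec_self]; norm_num)
      (by rw [wagnerZ_dotProduct_mulVec_self]; norm_num)
      wagnerH_dotProduct_mulVec_wagnerZ hab
  exact ⟨wagnerH, wagnerZ, linearIndependent_pair_of_dotProduct_mulVec_pos _ hpos, hpos⟩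
end
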